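/- Let Φ be a reduced crystallographic root system with simple roots α_1, …, α_n, coroot lattice R^∨, coweight lattice Q^∨, and Weyl group W, and let w₀ ∈ W satisfy w₀² = I. Let η′ ∈ Q^∨ with ⟨α_i, η′⟩ = 1, and let ζ′ ∈ Q^∨ and d′ ∈ ℤ satisfy s_i w₀ ζ′ − η′ = d′·α_i^∨. Set α_{i₁}^∨ := w₀s_iα_i^∨ and α_{i₁} := −w₀α_i, and define ζ″ := ζ′ + (−2d′ + 1)·α_{i₁}^∨ and μ″ := (−d′ + 1)·w₀s_iη′. Then for y″ := t^{μ″}(w₀s_i) ∈ W̃ one has y″ (t^{η′} s_i)(y″)⁻¹ = t^{ζ″}(w₀ s_i w₀), and ⟨α_{i₁}, μ″⟩ = −d′ + 1; in particular ⟨α_{i₁}, μ″⟩ ≥ 1 whenever d′ ≤ 0. -/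

import Mathlib

open scoped RealInnerProductSpace

namespace ADLV

variable {V : Type*} [NormedAddCommGroup V] [InnerProductSpace ℝ V]

/-- The coroot `α^∨ = 2α/(α,α)` of a root `α`. -/
noncomputable def coroot (α : V) : V := (2 / ⟪α, α⟫) • α

/-- The reflection `s_α : x ↦ x - ⟨α, x⟩ α^∨` in the hyperplane orthogonal to `α`,
as a linear automorphism. -/
noncomputable def sRefl (α : V) (hα : α ≠ 0) : V ≃ₗ[ℝ] V :=
  Module.reflection (f := (innerSL ℝ α : V →ₗ[ℝ] ℝ)) (x := coroot α)
    (by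
      have h : ⟪α, α⟫ ≠ 0 := inner_self_ne_zero.mpr hα
      simp [coroot, real_inner_smul_right]
      field_simp)

/-- The orthogonal projection `proj_α : x ↦ x - ½⟨α, x⟩ α^∨` of `V` onto the
hyperplane `H_α = {x : ⟨α, x⟩ = 0}`. -/
noncomputable def projH (α : V) (x : V) : V := x - (⟪α, x⟫ / 2) • coroot α

/-- The (finite) Weyl group: the group generated by the simple reflections. -/
noncomputable def weylGroup {n : ℕ} (α : Fin n → V) (hα : ∀ j, α j ≠ 0) :
    Subgroup (V ≃ₗ[ℝ] V) :=
  Subgroup.closure (Set.range fun j => sRefl (α j) (hα j))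

/-- The coroot lattice `R^∨ = ⊕_j ℤ α_j^∨`. -/
noncomputable def corootLattice {n : ℕ} (α : Fin n → V) : AddSubgroup V :=
  AddSubgroup.closure (Set.range fun j => coroot (α j))

/-- The coweight lattice `Q^∨ = {x : ⟨α_j, x⟩ ∈ ℤ for all j}`. -/
def coweightLattice {n : ℕ} (α : Fin n → V) : Set V :=
  {x : V | ∀ j, ∃ m : ℤ, ⟪α j, x⟫ = (m : ℝ)}

/-- Elements `t^μ u` of the (extended) affine Weyl group `Q^∨ ⋊ W`, realized inside the
semidirect product `V ⋊ GL(V)` with multiplication `(t^μ u)(t^λ v) = t^{μ + uλ}(uv)`. -/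
@[ext]
structure Aff (V : Type*) [NormedAddCommGroup V] [InnerProductSpace ℝ V] where
  /-- the translation part -/
  t : V
  /-- the linear part -/
  w : V ≃ₗ[ℝ] V

namespace Aff

instance : Mul (Aff V) := ⟨fun a b => ⟨a.t + a.w b.t, a.w * b.w⟩⟩
instance : One (Aff V) := ⟨⟨0, 1⟩⟩
instance : Inv (Aff V) := ⟨fun a => ⟨-(a.w⁻¹ a.t), a.w⁻¹⟩⟩

@[simp] lemma mul_t (a b : Aff V) : (a * b).t = a.t + a.w b.t := rfl
@[simp] lemma mul_w (a b : Aff V) : (a * b).w = a.w * b.w := rfl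
@[simp] lemma one_t : (1 : Aff V).t = 0 := rfl
@[simp] lemma one_w : (1 : Aff V).w = 1 := rfl
@[simp] lemma inv_t (a : Aff V) : (a⁻¹).t = -(a.w⁻¹ a.t) := rfl
@[simp] lemma inv_w (a : Aff V) : (a⁻¹).w = a.w⁻¹ := rfl

lemma mul_apply_w (f g : V ≃ₗ[ℝ] V) (x : V) : (f * g) x = f (g x) := rfl

instance : Group (Aff V) where
  mul_assoc a b c := by
    refine Aff.ext ?_ ?_
    · simp [mul_apply_w, map_add, add_assoc]
    · simp [mul_assoc]
  one_mul a := by refine Aff.ext ?_ ?_ <;> simp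
  mul_one a := by refine Aff.ext ?_ ?_ <;> simp
  inv_mul_cancel a := by
    refine Aff.ext ?_ ?_
    · simp [mul_apply_w]
    · simp

end Aff

/-! Conjugating `t^η s` by `t^μ u` in `V ⋊ GL(V)` gives `t^{μ + uη - (usu⁻¹)μ} (usu⁻¹)`.
For `u = w₀ s_i`, and with `ζ′ = w₀ s_i (η′ + d′ α_i^∨)` (from `w₀² = s_i² = 1`), both translation
parts become `w₀η′ - w₀α_i^∨ + (1 - d′) w₀ s_i α_i^∨`. The pairing identity follows from
`W`-invariance of the inner product and `⟨α_i, s_i η′⟩ = -⟨α_i, η′⟩ = -1`. -/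

lemma inner_coroot_self {α : V} (hα : α ≠ 0) : ⟪α, coroot α⟫ = 2 := by
  have h : ⟪α, α⟫ ≠ 0 := inner_self_ne_zero.mpr hα
  rw [coroot, real_inner_smul_right]
  field_simp

section Reflection

variable (α : V) (hα : α ≠ 0)

lemma sRefl_apply (x : V) : sRefl α hα x = x - ⟪α, x⟫ • coroot α := by
  simp [sRefl, Module.reflection_apply]

lemma sRefl_sRefl (x : V) : sRefl α hα (sRefl α hα x) = x :=
  Module.involutive_reflection _ x

lemma sRefl_of_inner_eq_one {x : V} (hx : ⟪α, x⟫ = 1) : sRefl α hα x = x - coroot α := by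
  rw [sRefl_apply, hx, one_smul]

lemma inner_sRefl_right (x : V) : ⟪α, sRefl α hα x⟫ = -⟪α, x⟫ := by
  rw [sRefl_apply, inner_sub_right, real_inner_smul_right, inner_coroot_self hα]
  ring

lemma inner_sRefl_sRefl (x y : V) : ⟪sRefl α hα x, sRefl α hα y⟫ = ⟪x, y⟫ := by
  have h : ⟪α, α⟫ ≠ 0 := inner_self_ne_zero.mpr hα
  simp only [sRefl_apply, coroot, inner_sub_left, inner_sub_right, real_inner_smul_left,
    real_inner_smul_right, real_inner_comm α x]
  field_simp
  ring

end Reflection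

lemma inner_map_map_of_mem_weylGroup {n : ℕ} (α : Fin n → V) (hα : ∀ j, α j ≠ 0)
    {g : V ≃ₗ[ℝ] V} (hg : g ∈ weylGroup α hα) (x y : V) : ⟪g x, g y⟫ = ⟪x, y⟫ := by
  induction hg using Subgroup.closure_induction generalizing x y with
  | mem g hg =>
    obtain ⟨j, rfl⟩ := hg
    exact inner_sRefl_sRefl _ _ x y
  | one => rfl
  | mul a b _ _ ha hb => exact (ha _ _).trans (hb x y)
  | inv a _ ha => simpa using (ha (a⁻¹ x) (a⁻¹ y)).symm

lemma Aff.mk_mul_mk_mul_inv (μ η : V) (u s : V ≃ₗ[ℝ] V) :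
    Aff.mk μ u * Aff.mk η s * (Aff.mk μ u)⁻¹ =
      Aff.mk (μ + u η - (u * s * u⁻¹) μ) (u * s * u⁻¹) := by
  ext1
  · simp only [Aff.mul_t, Aff.mul_w, Aff.inv_t, Aff.mul_apply_w, map_neg]
    abel
  · rfl

theorem conjugation_to_translated_target_general {n : ℕ}
    (α : Fin n → V) (hα : ∀ j, α j ≠ 0)
    (w₀ : V ≃ₗ[ℝ] V) (hw₀W : w₀ ∈ weylGroup α hα) (hw₀2 : w₀ * w₀ = 1)
    (i : Fin n) (η' ζ' : V)
    (hη'i : ⟪α i, η'⟫ = 1)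
    (d' : ℤ)
    (hd : sRefl (α i) (hα i) (w₀ ζ') - η' = (d' : ℝ) • coroot (α i)) :
    (Aff.mk (((-d' + 1 : ℤ) : ℝ) • (w₀ (sRefl (α i) (hα i) η'))) (w₀ * sRefl (α i) (hα i))
        * Aff.mk η' (sRefl (α i) (hα i))
        * (Aff.mk (((-d' + 1 : ℤ) : ℝ) • (w₀ (sRefl (α i) (hα i) η')))
            (w₀ * sRefl (α i) (hα i)))⁻¹
      = Aff.mk (ζ' + ((-2 * d' + 1 : ℤ) : ℝ) • (w₀ (sRefl (α i) (hα i) (coroot (α i)))))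
          (w₀ * sRefl (α i) (hα i) * w₀)) ∧
    ⟪-(w₀ (α i)), ((-d' + 1 : ℤ) : ℝ) • (w₀ (sRefl (α i) (hα i) η'))⟫
        = ((-d' + 1 : ℤ) : ℝ) ∧
    (d' ≤ 0 →
      (1 : ℝ) ≤ ⟪-(w₀ (α i)), ((-d' + 1 : ℤ) : ℝ) • (w₀ (sRefl (α i) (hα i) η'))⟫) := by
  set s := sRefl (α i) (hα i)
  have hw₀w₀ (x : V) : w₀ (w₀ x) = x := DFunLike.congr_fun hw₀2 x
  have hsη : s η' = η' - coroot (α i) := sRefl_of_inner_eq_one (α i) (hα i) hη'i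
  have hζ : ζ' = w₀ (s (η' + (d' : ℝ) • coroot (α i))) := by
    rw [← sub_eq_iff_eq_add'.mp hd, sRefl_sRefl, hw₀w₀]
  have hinner : ⟪-(w₀ (α i)), ((-d' + 1 : ℤ) : ℝ) • w₀ (s η')⟫ = ((-d' + 1 : ℤ) : ℝ) := by
    rw [inner_neg_left, real_inner_smul_right, inner_map_map_of_mem_weylGroup α hα hw₀W,
      inner_sRefl_right, hη'i]
    ring
  have hconj : w₀ * s * s * (w₀ * s)⁻¹ = w₀ * s * w₀ :=
    calc w₀ * s * s * (w₀ * s)⁻¹ = w₀ * s * w₀⁻¹ := by group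
      _ = w₀ * s * w₀ := by rw [inv_eq_of_mul_eq_one_right hw₀2]
  refine ⟨?_, hinner, fun hd' => ?_⟩
  · rw [Aff.mk_mul_mk_mul_inv, hconj]
    congr 1
    simp only [Aff.mul_apply_w, map_smul, hw₀w₀, hζ, hsη, map_add, map_sub]
    push_cast
    module
  · rw [hinner]
    exact_mod_cast (by omega : (1 : ℤ) ≤ -d' + 1)

/-- Let `w₀ ∈ W` satisfy `w₀² = I`.  Let `η′ ∈ Q^∨` with
`⟨α_i, η′⟩ = 1`, and let `ζ′ ∈ Q^∨` and `d′ ∈ ℤ` satisfy `s_i w₀ ζ′ - η′ = d′ • α_i^∨`.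
Set `α_{i₁}^∨ := w₀ s_i α_i^∨`, `α_{i₁} := -w₀ α_i`, `ζ″ := ζ′ + (-2d′ + 1) • α_{i₁}^∨`
and `μ″ := (-d′ + 1) • w₀ s_i η′`.  Then for `y″ := t^{μ″} (w₀ s_i) ∈ W̃` one has
`y″ (t^{η′} s_i) (y″)⁻¹ = t^{ζ″} (w₀ s_i w₀)` and `⟨α_{i₁}, μ″⟩ = -d′ + 1`; in
particular `⟨α_{i₁}, μ″⟩ ≥ 1` whenever `d′ ≤ 0`. -/
theorem conjugation_to_translated_target {n : ℕ}
    (α : Fin n → V) (hα : ∀ j, α j ≠ 0)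
    (hlin : LinearIndependent ℝ α)
    -- crystallographic: the Cartan integers `⟨α_k, α_j^∨⟩` are integers
    (hcart : ∀ k j, ∃ m : ℤ, ⟪α k, coroot (α j)⟫ = (m : ℝ))
    (w₀ : V ≃ₗ[ℝ] V) (hw₀W : w₀ ∈ weylGroup α hα) (hw₀2 : w₀ * w₀ = 1)
    (i : Fin n) (η' ζ' : V)
    (hη' : η' ∈ coweightLattice α) (hη'i : ⟪α i, η'⟫ = 1)
    (hζ' : ζ' ∈ coweightLattice α)
    (d' : ℤ)
    (hd : sRefl (α i) (hα i) (w₀ ζ') - η' = (d' : ℝ) • coroot (α i)) :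
    (Aff.mk (((-d' + 1 : ℤ) : ℝ) • (w₀ (sRefl (α i) (hα i) η'))) (w₀ * sRefl (α i) (hα i))
        * Aff.mk η' (sRefl (α i) (hα i))
        * (Aff.mk (((-d' + 1 : ℤ) : ℝ) • (w₀ (sRefl (α i) (hα i) η')))
            (w₀ * sRefl (α i) (hα i)))⁻¹
      = Aff.mk (ζ' + ((-2 * d' + 1 : ℤ) : ℝ) • (w₀ (sRefl (α i) (hα i) (coroot (α i)))))
          (w₀ * sRefl (α i) (hα i) * w₀)) ∧
    ⟪-(w₀ (α i)), ((-d' + 1 : ℤ) : ℝ) • (w₀ (sRefl (α i) (hα i) η'))⟫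
        = ((-d' + 1 : ℤ) : ℝ) ∧
    (d' ≤ 0 →
      (1 : ℝ) ≤ ⟪-(w₀ (α i)), ((-d' + 1 : ℤ) : ℝ) • (w₀ (sRefl (α i) (hα i) η'))⟫) :=
  conjugation_to_translated_target_general α hα w₀ hw₀W hw₀2 i η' ζ' hη'i d' hd

end ADLV
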